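/- arXiv:2407.14866 — 2 statements merged into one kernel-verified Lean document; each statement's English description precedes it below -/
import Mathlib

section
/- Let q ≥ 2, n ≥ 2 and r ≥ 1 be integers. Suppose S = (s_i) is an orientable sequence of order n over ℤ_q, and v = (v_0, ..., v_{n-r-1}) is a symmetric (n-r)-tuple over ℤ_q. Then |L_S(v)| is even, where L_S(v) is the set of n-tuples in L_n(v) that appear in S or in the reverse of S. -/
namespace OSeq

variable {q : ℕ}

/-- The `n`-tuple (window) of the sequence `s` at position `i`. -/
def window (s : ℤ → ZMod q) (n : ℕ) (i : ℤ) : Fin n → ZMod q :=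
  fun k => s (i + (k : ℕ))

/-- The reverse of an `n`-tuple. -/
def tupRev {n : ℕ} (u : Fin n → ZMod q) : Fin n → ZMod q :=
  fun k => u k.rev

/-- `m` is the (least) period of the periodic sequence `s`. -/
def IsPeriod (s : ℤ → ZMod q) (m : ℕ) : Prop :=
  0 < m ∧ (∀ i : ℤ, s (i + (m : ℤ)) = s i) ∧
    ∀ m' : ℕ, 0 < m' → (∀ i : ℤ, s (i + (m' : ℤ)) = s i) → m ≤ m'

/-- `s` is an `n`-window sequence of period `m`. -/
def IsNWindowSeq (s : ℤ → ZMod q) (n m : ℕ) : Prop :=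
  IsPeriod s m ∧ ∀ i j : ℤ, window s n i = window s n j → i ≡ j [ZMOD (m : ℤ)]

/-- `s` is an orientable sequence of order `n` and period `m`. -/
def IsOS (s : ℤ → ZMod q) (n m : ℕ) : Prop :=
  IsNWindowSeq s n m ∧ ∀ i j : ℤ, window s n i ≠ tupRev (window s n j)

/-- `s` is a negative orientable sequence of order `n` and period `m`. -/
def IsNOS (s : ℤ → ZMod q) (n m : ℕ) : Prop :=
  IsNWindowSeq s n m ∧ ∀ i j : ℤ, window s n i ≠ - tupRev (window s n j)

/-- `s` is a special orientable sequence of order `n` and period `m`: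
orientable and also negative orientable. -/
def IsSpecialOS (s : ℤ → ZMod q) (n m : ℕ) : Prop :=
  IsOS s n m ∧ ∀ i j : ℤ, window s n i ≠ - tupRev (window s n j)

/-- The weight modulo `q` of one period of `s`. -/
def wq (s : ℤ → ZMod q) (m : ℕ) : ZMod q :=
  ∑ i ∈ Finset.range m, s (i : ℤ)

/-- The alternating sign weight modulo `q` of one period of `s`. -/
def wqA (s : ℤ → ZMod q) (m : ℕ) : ZMod q :=
  ∑ i ∈ Finset.range m, (-1 : ZMod q) ^ (m - 1 - i) * s (i : ℤ)

/-- The Lempel homomorphism `D` on sequences. -/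
def D (t : ℤ → ZMod q) : ℤ → ZMod q := fun j => t (j + 1) - t j

/-- The homomorphism `A` on sequences. -/
def A (t : ℤ → ZMod q) : ℤ → ZMod q := fun j => t (j + 1) + t j

/-- Shift of a sequence by `c`. -/
def shift (t : ℤ → ZMod q) (c : ℤ) : ℤ → ZMod q := fun i => t (i + c)

/-- `t'` is a translate of `t`. -/
def IsTranslate (t t' : ℤ → ZMod q) : Prop := ∃ c : ZMod q, ∀ i : ℤ, t' i = t i + c

/-- `t'` is an alternating sign translate of `t`. -/
def IsAltTranslate (t t' : ℤ → ZMod q) : Prop :=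
  ∃ c : ZMod q, ∀ i : ℤ, t' i = t i + (if i % 2 = 0 then c else -c)

/-- Two sequences are (`n`-window) disjoint. -/
def WindowDisjoint (n : ℕ) (s t : ℤ → ZMod q) : Prop :=
  ∀ i j : ℤ, window s n i ≠ window t n j

/-- Orientable-disjoint. -/
def ODisjoint (n : ℕ) (s t : ℤ → ZMod q) : Prop :=
  WindowDisjoint n s t ∧ ∀ i j : ℤ, window s n i ≠ tupRev (window t n j)

/-- Negative orientable-disjoint (no-disjoint). -/
def NODisjoint (n : ℕ) (s t : ℤ → ZMod q) : Prop :=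
  WindowDisjoint n s t ∧ ∀ i j : ℤ, window s n i ≠ - tupRev (window t n j)

/-- Special-orientable-disjoint. -/
def SpecialODisjoint (n : ℕ) (s t : ℤ → ZMod q) : Prop :=
  ODisjoint n s t ∧ ∀ i j : ℤ, window s n i ≠ - tupRev (window t n j)

/-- The string `a^t` appears in `s`. -/
def HasString (s : ℤ → ZMod q) (a : ZMod q) (t : ℕ) : Prop :=
  ∃ j : ℤ, ∀ k : ℕ, k < t → s (j + (k : ℤ)) = a

/-- There is a run `a^t` of `a` in `s` starting at position `j`. -/
def IsRunAt (s : ℤ → ZMod q) (a : ZMod q) (j : ℤ) (t : ℕ) : Prop :=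
  (∀ k : ℕ, k < t → s (j + (k : ℤ)) = a) ∧ s (j - 1) ≠ a ∧ s (j + (t : ℤ)) ≠ a

/-- `a^t` is a maximal run of `a` in `s`: the string `a^t` appears and every
string `a^{t'}` appearing in `s` has `t' ≤ t`. -/
def IsMaxRun (s : ℤ → ZMod q) (a : ZMod q) (t : ℕ) : Prop :=
  HasString s a t ∧ ∀ t' : ℕ, HasString s a t' → t' ≤ t

/-- `k`-th entry of the alternating string `a, -a, a, -a, ...`. -/
def altVal (a : ZMod q) (k : ℕ) : ZMod q := if k % 2 = 0 then a else -a

/-- The signed string `ạ^t` (alternating `a, -a, ...`) appears in `s`. -/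
def HasSignedString (s : ℤ → ZMod q) (a : ZMod q) (t : ℕ) : Prop :=
  ∃ j : ℤ, ∀ k : ℕ, k < t → s (j + (k : ℤ)) = altVal a k

/-- There is a signed run `ạ^t` of `a` in `s` starting at position `j`. -/
def IsSignedRunAt (s : ℤ → ZMod q) (a : ZMod q) (j : ℤ) (t : ℕ) : Prop :=
  (∀ k : ℕ, k < t → s (j + (k : ℤ)) = altVal a k) ∧
    s (j - 1) ≠ -a ∧ s (j + (t : ℤ)) ≠ altVal a t

/-- `ạ^t` is a maximal signed run of `a` in `s`. -/
def IsMaxSignedRun (s : ℤ → ZMod q) (a : ZMod q) (t : ℕ) : Prop :=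
  HasSignedString s a t ∧ ∀ t' : ℕ, HasSignedString s a t' → t' ≤ t

/-- The sequence obtained from the ring sequence `[s_0,...,s_{m-1}]` of `s` by
inserting one extra symbol `a` at ring position `r`, i.e. with ring sequence
`[s_0,...,s_{r-1}, a, s_r, ..., s_{m-1}]` of length `m+1`. -/
def insert1 (s : ℤ → ZMod q) (m r : ℕ) (a : ZMod q) : ℤ → ZMod q :=
  fun j =>
    let j' := (j % ((m : ℤ) + 1)).toNat
    if j' < r then s (j' : ℤ) else if j' = r then a else s ((j' : ℤ) - 1)

/-- The sequence obtained from the ring sequence `[s_0,...,s_{m-1}]` of `s` by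
inserting the two symbols `a, -a` at ring position `r`, i.e. with ring sequence
`[s_0,...,s_{r-1}, a, -a, s_r, ..., s_{m-1}]` of length `m+2`. -/
def insert2 (s : ℤ → ZMod q) (m r : ℕ) (a : ZMod q) : ℤ → ZMod q :=
  fun j =>
    let j' := (j % ((m : ℤ) + 2)).toNat
    if j' < r then s (j' : ℤ)
    else if j' = r then a
    else if j' = r + 1 then -a
    else s ((j' : ℤ) - 2)

/-- The operation `E_a` (with the convention `E_0(S) = S`). -/
def Emod (s : ℤ → ZMod q) (m r : ℕ) (a : ZMod q) : ℤ → ZMod q :=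
  if a = 0 then s else insert1 s m r a

/-- A sequence is good (for order `n`) if every run of `0` has length at most `n-2`. -/
def GoodSeq (s : ℤ → ZMod q) (n : ℕ) : Prop :=
  ∀ t : ℕ, HasString s 0 t → t ≤ n - 2

/-- A tuple is uniform if it is constant. -/
def Uniform {n : ℕ} (u : Fin n → ZMod q) : Prop := ∃ c : ZMod q, ∀ i, u i = c

/-- A tuple is symmetric if it equals its own reverse. -/
def Symm {n : ℕ} (u : Fin n → ZMod q) : Prop := ∀ i : Fin n, u i = u i.rev

/-- An `n`-tuple is `m`-symmetric (`m ≤ n`) if `u_i = u_{m-1-i}` for `0 ≤ i ≤ m-1`. -/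
def MSymm {n : ℕ} (u : Fin n → ZMod q) (m : ℕ) (hm : m ≤ n) : Prop :=
  ∀ i : Fin m, u (Fin.castLE hm i) = u (Fin.castLE hm i.rev)

/-- An `n`-tuple (`n ≥ 2`) is alternating. -/
def Alternating {n : ℕ} (hn : 2 ≤ n) (u : Fin n → ZMod q) : Prop :=
  u ⟨0, by omega⟩ ≠ u ⟨1, by omega⟩ ∧
    ∀ i : Fin n, u i = if (i : ℕ) % 2 = 0 then u ⟨0, by omega⟩ else u ⟨1, by omega⟩

/-- `L_n(v)`: the set of `n`-tuples whose first `n-r` entries agree with the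
`(n-r)`-tuple `v`. -/
def Lset (n r : ℕ) (v : Fin (n - r) → ZMod q) : Set (Fin n → ZMod q) :=
  {u | ∀ i : Fin (n - r), u (Fin.castLE (Nat.sub_le n r) i) = v i}

/-- The `n`-tuple `u` appears in the sequence `s`. -/
def AppearsIn (s : ℤ → ZMod q) (n : ℕ) (u : Fin n → ZMod q) : Prop :=
  ∃ i : ℤ, window s n i = u

end OSeq

/-!
The tuples of `L_S(v)` split into those appearing in `S` and those appearing in `S^R`, and the
two parts are disjoint because `S` is orientable. Both parts are counted by positions in `ℤ_m`,
where windows of `S` are in bijection with positions. The reverse of `s_n(i)` lies in `L_n(v)`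
exactly when `s_n(i + r)` does, since both conditions read the same entries of `S` and `v` is
symmetric. Hence the second count is the first one shifted by `r`, and `|L_S(v)|` is twice it.
-/

open OSeq Set

namespace OSeq

variable {q n m : ℕ}

theorem tupRev_involutive : Function.Involutive (tupRev : (Fin n → ZMod q) → Fin n → ZMod q) :=
  fun u => funext fun k => by simp [tupRev]

theorem tupRev_window_mem_Lset_iff {r : ℕ} {v : Fin (n - r) → ZMod q} (hv : Symm v)
    (s : ℤ → ZMod q) (j : ℤ) :
    tupRev (window s n j) ∈ Lset n r v ↔ window s n (j + r) ∈ Lset n r v := by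
  have key : ∀ k : Fin (n - r), tupRev (window s n j) (Fin.castLE (Nat.sub_le n r) k) =
      window s n (j + r) (Fin.castLE (Nat.sub_le n r) k.rev) := by
    intro k
    simp only [tupRev, window, Fin.rev, Fin.castLE]
    congr 1
    omega
  simp only [Lset, mem_ofPred_eq, key]
  refine ⟨fun h k => ?_, fun h k => ?_⟩
  · simpa [hv k.rev] using h k.rev
  · rw [h, ← hv]

variable {s : ℤ → ZMod q}

theorem IsPeriod.periodic_window (hs : IsPeriod s m) : Function.Periodic (window s n) m :=
  fun i => funext fun k => by simp only [window]; rw [add_right_comm, hs.2.1]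

/-- For an `n`-window sequence of period `m` this lists the windows of `s` without repetition. -/
def cyclicWindow (s : ℤ → ZMod q) (n m : ℕ) (k : ZMod m) : Fin n → ZMod q :=
  window s n k.val

variable [NeZero m]

theorem cyclicWindow_intCast (hs : IsPeriod s m) (i : ℤ) :
    cyclicWindow s n m i = window s n i := by
  rw [cyclicWindow, ZMod.val_intCast, Int.emod_def, mul_comm]
  exact hs.periodic_window.sub_int_mul_eq (i / m)

theorem cyclicWindow_add_natCast (hs : IsPeriod s m) (k : ZMod m) (r : ℕ) :
    cyclicWindow s n m (k + r) = window s n (k.val + r) := by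
  rw [← cyclicWindow_intCast hs]
  push_cast
  rw [ZMod.natCast_zmod_val]

theorem IsNWindowSeq.cyclicWindow_injective (hs : IsNWindowSeq s n m) :
    Function.Injective (cyclicWindow s n m) := fun k k' h => by
  simpa using (ZMod.intCast_eq_intCast_iff _ _ m).2 (hs.2 _ _ h)

theorem appearsIn_iff_mem_range (hs : IsPeriod s m) {u : Fin n → ZMod q} :
    AppearsIn s n u ↔ u ∈ range (cyclicWindow s n m) :=
  ⟨fun ⟨i, hi⟩ => ⟨i, by rw [cyclicWindow_intCast hs, hi]⟩, fun ⟨k, hk⟩ => ⟨_, hk⟩⟩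

theorem finite_setOf_appearsIn (hs : IsPeriod s m) : {u | AppearsIn s n u}.Finite :=
  (finite_range (cyclicWindow s n m)).subset fun _ hu => (appearsIn_iff_mem_range hs).1 hu

theorem ncard_sep_appearsIn (hs : IsNWindowSeq s n m) (T : Set (Fin n → ZMod q)) :
    {u ∈ T | AppearsIn s n u}.ncard = (cyclicWindow s n m ⁻¹' T).ncard := by
  rw [← ncard_image_of_injective _ hs.cyclicWindow_injective, image_preimage_eq_inter_range]
  simp_rw [appearsIn_iff_mem_range hs.1]
  rfl

theorem ncard_sep_appearsIn_tupRev (hs : IsNWindowSeq s n m) (T : Set (Fin n → ZMod q)) :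
    {u ∈ T | AppearsIn s n (tupRev u)}.ncard =
      (cyclicWindow s n m ⁻¹' (tupRev ⁻¹' T)).ncard := by
  rw [← ncard_sep_appearsIn hs, ← ncard_image_of_injective _ tupRev_involutive.injective,
    tupRev_involutive.image_eq_preimage_symm]
  congr 1
  ext u
  simp [tupRev_involutive u]

end OSeq

theorem LS_even_general {q n m r : ℕ}
    (s : ℤ → ZMod q) (hS : IsOS s n m)
    (v : Fin (n - r) → ZMod q) (hv : Symm v) :
    Even (Set.ncard {u ∈ Lset n r v | AppearsIn s n u ∨ AppearsIn s n (tupRev u)}) := by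
  obtain ⟨hwin, horient⟩ := hS
  have : NeZero m := ⟨hwin.1.1.ne'⟩
  have hdisj : Disjoint {u ∈ Lset n r v | AppearsIn s n u}
      {u ∈ Lset n r v | AppearsIn s n (tupRev u)} :=
    disjoint_left.2 fun u ⟨_, i, hi⟩ ⟨_, j, hj⟩ =>
      horient i j (by rw [hi, hj, tupRev_involutive])
  have hshift : cyclicWindow s n m ⁻¹' (tupRev ⁻¹' Lset n r v) =
      (· + (r : ZMod m)) ⁻¹' (cyclicWindow s n m ⁻¹' Lset n r v) := by
    ext k
    simp only [mem_preimage, cyclicWindow_add_natCast hwin.1]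
    exact tupRev_window_mem_Lset_iff hv s _
  have hfin : {u | AppearsIn s n u}.Finite := finite_setOf_appearsIn hwin.1
  rw [sep_or, ncard_union_eq hdisj (hfin.subset fun _ hu => hu.2)
      ((hfin.preimage tupRev_involutive.injective.injOn).subset fun _ hu => hu.2),
    ncard_sep_appearsIn hwin, ncard_sep_appearsIn_tupRev hwin, hshift,
    ncard_preimage_of_injective_subset_range (add_left_injective _)
      fun k _ => ⟨k - (r : ZMod m), sub_add_cancel _ _⟩]
  exact ⟨_, rfl⟩

/-- If `S` is an orientable sequence of order `n` over `ℤ_q` and `v` is a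
symmetric `(n-r)`-tuple (`r ≥ 1`), then the set `L_S(v)` of `n`-tuples of
`L_n(v)` appearing in `S` or in the reverse of `S` has even cardinality. -/
theorem LS_even {q n m r : ℕ} (hq : 2 ≤ q) (hn : 2 ≤ n) (hr : 1 ≤ r)
    (s : ℤ → ZMod q) (hS : IsOS s n m)
    (v : Fin (n - r) → ZMod q) (hv : Symm v) :
    Even (Set.ncard {u ∈ Lset n r v | AppearsIn s n u ∨ AppearsIn s n (tupRev u)}) :=
  LS_even_general s hS v hv
end

section
/- Let q ≥ 3 be an odd integer and n ≥ 2 an integer. Then the period of any orientable sequence of order n over ℤ_q is at most (q^n − q^{⌈n/2⌉} − q^{⌈(n-1)/2⌉} + q)/2. -/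
/-! The windows of an orientable sequence of period `m` and their reverses are `2m` distinct
`n`-tuples, none of them symmetric. Fix a symmetric `(n-1)`-tuple `p`. Along the cycle `p` is
entered as often as it is left, so the letters `a` with `p a` a window and the letters `b` with
`b p` a window are equinumerous; by orientability and the symmetry of `p` they are also
disjoint. As `q` is odd, some letter `c` lies in neither set, and then `p c` is neither a
window nor a reversed window. If `p` is not uniform, `p c` is not symmetric either. Counting
these `q^⌈(n-1)/2⌉ - q` tuples `p c`, the `q^⌈n/2⌉` symmetric tuples and the `2m` windows
and reversed windows inside all `q^n` tuples gives the bound. -/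

namespace OSeq

open Finset Function

variable {q : ℕ}

section Tuples

variable {k n : ℕ}

lemma tupRev_tupRev (u : Fin n → ZMod q) : tupRev (tupRev u) = u := by
  funext i; simp [tupRev]

lemma tupRev_injective : Injective (tupRev : (Fin n → ZMod q) → Fin n → ZMod q) :=
  LeftInverse.injective tupRev_tupRev

lemma tupRev_cons (a : ZMod q) (p : Fin k → ZMod q) :
    tupRev (Fin.cons a p : Fin (k + 1) → ZMod q) = Fin.snoc (tupRev p) a :=
  Fin.cons_comp_rev a p

lemma tupRev_snoc (p : Fin k → ZMod q) (a : ZMod q) :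
    tupRev (Fin.snoc p a : Fin (k + 1) → ZMod q) = Fin.cons a (tupRev p) :=
  Fin.snoc_comp_rev a p

lemma tupRev_eq_self_iff {u : Fin n → ZMod q} : tupRev u = u ↔ Symm u := by
  simp only [funext_iff, tupRev, Symm, eq_comm]

lemma uniform_of_snoc_eq_cons {p : Fin k → ZMod q} {c : ZMod q}
    (h : (Fin.snoc p c : Fin (k + 1) → ZMod q) = Fin.cons c p) : Uniform p := by
  refine ⟨c, fun ⟨i, hi⟩ => ?_⟩
  induction i with
  | zero =>
    have := congrFun h (Fin.castSucc ⟨0, hi⟩)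
    rwa [Fin.snoc_castSucc, show Fin.castSucc ⟨0, hi⟩ = 0 from rfl, Fin.cons_zero] at this
  | succ i ih =>
    have := congrFun h (Fin.castSucc ⟨i + 1, hi⟩)
    rw [Fin.snoc_castSucc, show Fin.castSucc ⟨i + 1, hi⟩ = Fin.succ ⟨i, by omega⟩ from rfl,
      Fin.cons_succ] at this
    rw [this, ih]

lemma uniform_of_symm_snoc {p : Fin k → ZMod q} {c : ZMod q} (hp : Symm p)
    (h : Symm (Fin.snoc p c : Fin (k + 1) → ZMod q)) : Uniform p := by
  apply uniform_of_snoc_eq_cons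
  rw [← tupRev_eq_self_iff.2 h, tupRev_snoc, tupRev_eq_self_iff.2 hp]

lemma symm_of_uniform {u : Fin n → ZMod q} (h : Uniform u) : Symm u := by
  obtain ⟨c, hc⟩ := h
  exact fun i => by rw [hc, hc]

end Tuples

lemma window_succ_eq_cons (s : ℤ → ZMod q) (k : ℕ) (i : ℤ) :
    window s (k + 1) i = Fin.cons (s i) (window s k (i + 1)) := by
  funext j
  refine Fin.cases ?_ (fun j => ?_) j
  · simp [window]
  · simp only [window, Fin.cons_succ, Fin.val_succ]
    push_cast
    ring_nf

lemma window_succ_eq_snoc (s : ℤ → ZMod q) (k : ℕ) (i : ℤ) :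
    window s (k + 1) i = Fin.snoc (window s k i) (s (i + k)) := by
  funext j
  refine Fin.lastCases ?_ (fun j => ?_) j <;> simp [window]

section Windows

variable {s : ℤ → ZMod q} {n m : ℕ}

lemma IsPeriod.window_periodic (h : IsPeriod s m) : Periodic (window s n) m := fun i => by
  funext j
  simp only [window]
  rw [add_right_comm]
  exact h.2.1 _

def windows (s : ℤ → ZMod q) (n m : ℕ) : Finset (Fin n → ZMod q) :=
  (range m).image fun i : ℕ => window s n i

lemma IsNWindowSeq.injOn_window (h : IsNWindowSeq s n m) :
    Set.InjOn (fun i : ℕ => window s n i) (range m) := by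
  intro i hi j hj hij
  have := Int.natCast_modEq_iff.1 (h.2 i j hij)
  rwa [Nat.ModEq, Nat.mod_eq_of_lt (mem_range.1 hi), Nat.mod_eq_of_lt (mem_range.1 hj)] at this

lemma IsNWindowSeq.card_windows (h : IsNWindowSeq s n m) : #(windows s n m) = m := by
  rw [windows, card_image_of_injOn h.injOn_window, card_range]

lemma IsOS.disjoint_windows_image_tupRev (h : IsOS s n m) :
    Disjoint (windows s n m) ((windows s n m).image tupRev) := by
  simp only [disjoint_left, windows, mem_image, mem_range]
  rintro _ ⟨i, -, rfl⟩ ⟨_, ⟨j, -, rfl⟩, hij⟩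
  exact h.2 i j hij.symm

lemma IsOS.not_symm_of_mem (h : IsOS s n m) {u : Fin n → ZMod q}
    (hu : u ∈ windows s n m ∪ (windows s n m).image tupRev) : ¬ Symm u := by
  intro hsymm
  have hrev : tupRev u = u := tupRev_eq_self_iff.2 hsymm
  have hW : u ∈ windows s n m ↔ u ∈ (windows s n m).image tupRev := by
    conv_rhs => rw [← hrev]
    exact tupRev_injective.mem_finset_image.symm
  rw [mem_union, ← hW, or_self] at hu
  exact disjoint_left.1 h.disjoint_windows_image_tupRev hu (hW.1 hu)

end Windows

lemma _root_.Function.Periodic.card_filter_range_succ {P : ℕ → Prop} [DecidablePred P] {m : ℕ}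
    (hP : Periodic P m) : #{i ∈ range m | P (i + 1)} = #{i ∈ range m | P i} := by
  have hshift : ((range m).filter fun i => P (i + 1)).map (addRightEmbedding 1) =
      (Ico 1 (1 + m)).filter P := by
    have hIco := map_add_right_Ico 0 m 1
    rw [zero_add, add_comm] at hIco
    rw [← hIco, filter_map, range_eq_Ico]
    rfl
  rw [← card_map (addRightEmbedding 1), hshift, Nat.filter_Ico_card_eq_of_periodic _ _ _ hP,
    Nat.count_eq_card_filter_range]

section DeBruijn

variable {s : ℤ → ZMod q} {k m : ℕ}

def successors (s : ℤ → ZMod q) (m : ℕ) (p : Fin k → ZMod q) : Finset (ZMod q) :=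
  ((range m).filter fun i : ℕ => window s k i = p).image fun i : ℕ => s ((i : ℤ) + k)

def predecessors (s : ℤ → ZMod q) (m : ℕ) (p : Fin k → ZMod q) : Finset (ZMod q) :=
  ((range m).filter fun i : ℕ => window s k ↑(i + 1) = p).image fun i : ℕ => s i

lemma IsNWindowSeq.card_successors (h : IsNWindowSeq s (k + 1) m) (p : Fin k → ZMod q) :
    #(successors s m p) = #((range m).filter fun i : ℕ => window s k i = p) := by
  refine card_image_of_injOn fun i hi j hj hij => h.injOn_window ?_ ?_ ?_
  · exact (mem_filter.1 hi).1
  · exact (mem_filter.1 hj).1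
  · simp only [window_succ_eq_snoc, (mem_filter.1 hi).2, (mem_filter.1 hj).2]
    exact congrArg _ hij

lemma IsNWindowSeq.card_predecessors (h : IsNWindowSeq s (k + 1) m) (p : Fin k → ZMod q) :
    #(predecessors s m p) = #((range m).filter fun i : ℕ => window s k ↑(i + 1) = p) := by
  refine card_image_of_injOn fun i hi j hj hij => h.injOn_window ?_ ?_ ?_
  · exact (mem_filter.1 hi).1
  · exact (mem_filter.1 hj).1
  · have hi' := (mem_filter.1 hi).2
    have hj' := (mem_filter.1 hj).2
    push_cast at hi' hj'
    simp only [window_succ_eq_cons, hi', hj']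
    rw [hij]

lemma IsNWindowSeq.card_predecessors_eq_card_successors (h : IsNWindowSeq s (k + 1) m)
    (p : Fin k → ZMod q) : #(predecessors s m p) = #(successors s m p) := by
  have hper : Periodic (fun i : ℕ => window s k i = p) m := fun i => by
    simp only [Nat.cast_add, h.1.window_periodic (i : ℤ)]
  rw [h.card_predecessors, h.card_successors, hper.card_filter_range_succ]

lemma mem_successors_of_snoc_mem {p : Fin k → ZMod q} {c : ZMod q}
    (hc : Fin.snoc p c ∈ windows s (k + 1) m) : c ∈ successors s m p := by
  obtain ⟨i, hi, hic⟩ := mem_image.1 hc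
  rw [window_succ_eq_snoc, Fin.snoc_inj] at hic
  exact mem_image.2 ⟨i, mem_filter.2 ⟨hi, hic.1⟩, hic.2⟩

lemma mem_predecessors_of_cons_mem {p : Fin k → ZMod q} {c : ZMod q}
    (hc : Fin.cons c p ∈ windows s (k + 1) m) : c ∈ predecessors s m p := by
  obtain ⟨i, hi, hic⟩ := mem_image.1 hc
  rw [window_succ_eq_cons, Fin.cons_inj] at hic
  exact mem_image.2 ⟨i, mem_filter.2 ⟨hi, by exact_mod_cast hic.2⟩, hic.1⟩

lemma IsOS.disjoint_successors_predecessors (h : IsOS s (k + 1) m) {p : Fin k → ZMod q}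
    (hp : Symm p) : Disjoint (successors s m p) (predecessors s m p) := by
  simp only [disjoint_left, successors, predecessors, mem_image, mem_filter]
  rintro _ ⟨i, ⟨-, hi⟩, rfl⟩ ⟨j, ⟨-, hj⟩, hij⟩
  push_cast at hj
  apply h.2 i j
  rw [window_succ_eq_snoc, window_succ_eq_cons, hi, hj, hij, tupRev_cons,
    tupRev_eq_self_iff.2 hp]

end DeBruijn

lemma exists_notMem_union_of_odd_card {α : Type*} [Fintype α] [DecidableEq α]
    (hα : Odd (Fintype.card α)) {A B : Finset α} (hAB : Disjoint A B) (hcard : #A = #B) :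
    ∃ c, c ∉ A ∪ B := by
  by_contra! hall
  have : #(A ∪ B) = Fintype.card α := by
    rw [← card_univ]
    exact congrArg card (eq_univ_of_forall hall)
  rw [card_union_of_disjoint hAB, hcard] at this
  exact Nat.not_even_iff_odd.2 hα ⟨#B, this.symm⟩

lemma IsOS.exists_snoc_notMem {s : ℤ → ZMod q} {k m : ℕ} (h : IsOS s (k + 1) m) (hq : Odd q)
    {p : Fin k → ZMod q} (hp : Symm p) :
    ∃ c, Fin.snoc p c ∉ windows s (k + 1) m ∪ (windows s (k + 1) m).image tupRev := by
  have : NeZero q := ⟨hq.pos.ne'⟩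
  obtain ⟨c, hc⟩ := exists_notMem_union_of_odd_card (by rwa [ZMod.card])
    (h.disjoint_successors_predecessors hp) (h.1.card_predecessors_eq_card_successors p).symm
  refine ⟨c, fun hmem => hc ?_⟩
  have hrev : Fin.snoc p c = tupRev (Fin.cons c p) := by rw [tupRev_cons, tupRev_eq_self_iff.2 hp]
  rcases mem_union.1 hmem with hW | hWr
  · exact mem_union_left _ (mem_successors_of_snoc_mem hW)
  · rw [hrev, tupRev_injective.mem_finset_image] at hWr
    exact mem_union_right _ (mem_predecessors_of_cons_mem hWr)

section Counting

variable {k n : ℕ}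

instance : DecidablePred (Symm : (Fin n → ZMod q) → Prop) :=
  fun u => inferInstanceAs (Decidable (∀ i, u i = u i.rev))

instance [NeZero q] : DecidablePred (Uniform : (Fin n → ZMod q) → Prop) :=
  fun u => inferInstanceAs (Decidable (∃ c, ∀ i, u i = c))

-- A symmetric tuple is determined by its first half, `⌈n/2⌉` free entries.
lemma card_symm [NeZero q] (n : ℕ) : #{u : Fin n → ZMod q | Symm u} = q ^ ((n + 1) / 2) := by
  rw [show q ^ ((n + 1) / 2) = #(univ : Finset (Fin ((n + 1) / 2) → ZMod q)) by simp]
  refine card_bij' (fun u _ j => u ⟨j, by omega⟩)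
    (fun v _ i => v ⟨min i (n - 1 - i), by omega⟩) (fun _ _ => mem_univ _) ?_ ?_ ?_
  · intro v _
    simp only [mem_filter, mem_univ, true_and]
    exact fun i => congrArg v (Fin.ext (by simp only [Fin.val_rev]; omega))
  · intro u hu
    funext i
    dsimp only
    by_cases hle : (i : ℕ) ≤ n - 1 - i
    · exact congrArg u (Fin.ext (by simp [hle]))
    · rw [(mem_filter.1 hu).2 i]
      exact congrArg u (Fin.ext (by simp only [Fin.val_rev]; omega))
  · intro v _
    funext j
    exact congrArg v (Fin.ext (by simp only; omega))

lemma card_uniform [NeZero q] (hk : 0 < k) : #{u : Fin k → ZMod q | Uniform u} = q := by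
  have hU : ({u : Fin k → ZMod q | Uniform u} : Finset _) = univ.image (const (Fin k)) := by
    ext u
    simp only [mem_filter, mem_univ, true_and, mem_image, Uniform, funext_iff, const_apply, eq_comm]
  have : Nonempty (Fin k) := ⟨⟨0, hk⟩⟩
  rw [hU, card_image_of_injective _ const_injective, card_univ, ZMod.card]

lemma card_symm_and_not_uniform [NeZero q] (hk : 0 < k) :
    #{u : Fin k → ZMod q | Symm u ∧ ¬ Uniform u} = q ^ ((k + 1) / 2) - q := by
  rw [filter_and_not, card_sdiff_of_subset
    (monotone_filter_right _ fun _ _ => symm_of_uniform), card_symm, card_uniform hk]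

end Counting

lemma IsOS.two_mul_add_le {s : ℤ → ZMod q} {k m : ℕ} (hS : IsOS s (k + 1) m) (hq : Odd q)
    (hk : 0 < k) : 2 * m + q ^ ((k + 2) / 2) + (q ^ ((k + 1) / 2) - q) ≤ q ^ (k + 1) := by
  have : NeZero q := ⟨hq.pos.ne'⟩
  choose! c hc using fun p (hp : Symm p) => hS.exists_snoc_notMem hq hp
  set W := windows s (k + 1) m ∪ (windows s (k + 1) m).image tupRev
  set M := ({p : Fin k → ZMod q | Symm p ∧ ¬ Uniform p} : Finset _).image
    fun p => (Fin.snoc p (c p) : Fin (k + 1) → ZMod q)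
  have hW : #W = 2 * m := by
    rw [card_union_of_disjoint hS.disjoint_windows_image_tupRev,
      card_image_of_injective _ tupRev_injective, hS.1.card_windows, two_mul]
  have hM : #M = q ^ ((k + 1) / 2) - q := by
    rw [card_image_of_injective _ fun p p' h => (Fin.snoc_inj.1 h).1, card_symm_and_not_uniform hk]
  set S : Finset (Fin (k + 1) → ZMod q) := {u | Symm u}
  have hSym : #S = q ^ ((k + 2) / 2) := card_symm (k + 1)
  have hWS : Disjoint W S :=
    disjoint_left.2 fun u hu hu' => hS.not_symm_of_mem hu (mem_filter.1 hu').2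
  have hWM : Disjoint W M := by
    simp only [M, disjoint_right, mem_image, mem_filter]
    rintro _ ⟨p, ⟨-, hp, -⟩, rfl⟩
    exact hc p hp
  have hSM : Disjoint S M := by
    simp only [S, M, disjoint_right, mem_image, mem_filter]
    rintro _ ⟨p, ⟨-, hp, hpu⟩, rfl⟩ ⟨-, hsymm⟩
    exact hpu (uniform_of_symm_snoc hp hsymm)
  have hcard := card_le_univ (W ∪ (S ∪ M))
  rwa [card_union_of_disjoint (disjoint_union_right.2 ⟨hWS, hWM⟩), card_union_of_disjoint hSM,
    hW, hM, hSym, Fintype.card_fun, ZMod.card, Fintype.card_fin, ← add_assoc] at hcard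

end OSeq

open OSeq

theorem period_le_of_orientable_odd_general {q n m : ℕ} (hqodd : Odd q)
    (hn : 2 ≤ n) (s : ℤ → ZMod q) (hS : IsOS s n m) :
    2 * (m : ℤ) ≤ (q : ℤ) ^ n - (q : ℤ) ^ ((n + 1) / 2) - (q : ℤ) ^ (n / 2) + q := by
  obtain ⟨k, rfl⟩ : ∃ k, n = k + 1 := ⟨n - 1, by omega⟩
  have hcount := hS.two_mul_add_le hqodd (by omega)
  have hq : q ≤ q ^ ((k + 1) / 2) := Nat.le_self_pow (by omega) q
  zify [hq] at hcount
  linarith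

/-- For odd `q ≥ 3` and `n ≥ 2`, the period of any orientable sequence of order `n`
over `ℤ_q` is at most `(q^n - q^⌈n/2⌉ - q^⌈(n-1)/2⌉ + q)/2`. -/
theorem period_le_of_orientable_odd {q n m : ℕ} (hq : 3 ≤ q) (hqodd : Odd q)
    (hn : 2 ≤ n) (s : ℤ → ZMod q) (hS : IsOS s n m) :
    2 * (m : ℤ) ≤ (q : ℤ) ^ n - (q : ℤ) ^ ((n + 1) / 2) - (q : ℤ) ^ (n / 2) + q :=
  period_le_of_orientable_odd_general hqodd hn s hS
end
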